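/- arXiv:2006.07567 — 5 statements merged into one kernel-verified Lean document; each statement's English description precedes it below -/
import Mathlib

section
/- Let X be a finite type with a probability distribution μ on X, let K be a positive integer, and let Qc, Qmi : X → Fin K → ℝ be two (strictly positive) conditional probability distributions over labels, i.e., for every x, Qc x and Qmi x are probability vectors with all entries positive. Define the objective L(Q) = ∑_{x} μ x * ∑_{k} Q x k * (Real.log (Qmi x k) - Real.log (Qc x k)) for a conditional distribution Q : X → Fin K → ℝ (each Q x a probability vector). Then the conditional distribution Q* given by Q* x = onehot(argmin_k (Real.log (Qmi x k) - Real.log (Qc x k))) minimizes L over all conditional distributions Q: for every conditional Q, L(Q) ≥ L(Q*). -/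
/-- Theorem 1 of the paper: the one-hot conditional concentrated at the
pointwise minimizer of the log density ratio `log (Qmi x k) - log (Qc x k)` minimizes
the objective `L(Q) = ∑ x, μ x * ∑ k, Q x k * (log (Qmi x k) - log (Qc x k))`
over all conditional probability distributions `Q`. -/
theorem stmt_1 (X : Type*) [Fintype X] (μ : X → ℝ)
    (hμ0 : ∀ x, 0 ≤ μ x) (hμ1 : ∑ x, μ x = 1)
    (K : ℕ) (hK : 0 < K)
    (Qc Qmi : X → Fin K → ℝ)
    (hQc0 : ∀ x k, 0 < Qc x k) (hQc1 : ∀ x, ∑ k, Qc x k = 1)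
    (hQmi0 : ∀ x k, 0 < Qmi x k) (hQmi1 : ∀ x, ∑ k, Qmi x k = 1)
    (km : X → Fin K)
    (hkm : ∀ x k, Real.log (Qmi x (km x)) - Real.log (Qc x (km x)) ≤
      Real.log (Qmi x k) - Real.log (Qc x k))
    (Q : X → Fin K → ℝ)
    (hQ0 : ∀ x k, 0 ≤ Q x k) (hQ1 : ∀ x, ∑ k, Q x k = 1) :
    ∑ x, μ x * ∑ k, Q x k * (Real.log (Qmi x k) - Real.log (Qc x k)) ≥
    ∑ x, μ x * ∑ k, (if k = km x then (1 : ℝ) else 0) *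
      (Real.log (Qmi x k) - Real.log (Qc x k)) := by
  apply Finset.sum_le_sum
  intro x _
  apply mul_le_mul_of_nonneg_left _ (hμ0 x)
  have h1 : ∑ k, (if k = km x then (1 : ℝ) else 0) *
      (Real.log (Qmi x k) - Real.log (Qc x k)) =
      Real.log (Qmi x (km x)) - Real.log (Qc x (km x)) := by
    rw [Finset.sum_eq_single (km x)]
    · simp
    · intro b _ hb; simp [hb]
    · simp
  rw [h1]
  calc Real.log (Qmi x (km x)) - Real.log (Qc x (km x))
      = ∑ k, Q x k * (Real.log (Qmi x (km x)) - Real.log (Qc x (km x))) := by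
        rw [← Finset.sum_mul, hQ1, one_mul]
    _ ≤ ∑ k, Q x k * (Real.log (Qmi x k) - Real.log (Qc x k)) := by
        apply Finset.sum_le_sum
        intro k _
        exact mul_le_mul_of_nonneg_left (hkm x k) (hQ0 x k)
end

section
/- Let Ω be a finite type and let P and Q be probability distributions on Ω with Q strictly positive. For every function T : Ω → ℝ, one has ∑_ω P ω * T ω - Real.log (∑_ω Q ω * Real.exp (T ω)) ≤ KL(P ‖ Q), where KL(P ‖ Q) = ∑_ω P ω * Real.log (P ω / Q ω) (with the convention 0 * log 0 = 0). -/
/-- Donsker–Varadhan lower bound, Equation (9) of the paper, '≤' direction: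
for every statistics function `T`, `E_P[T] - log E_Q[exp T] ≤ KL(P ‖ Q)`. -/
theorem stmt_5 (Ω : Type*) [Fintype Ω]
    (P Q : Ω → ℝ) (hP0 : ∀ ω, 0 ≤ P ω) (hP1 : ∑ ω, P ω = 1)
    (hQ0 : ∀ ω, 0 < Q ω) (hQ1 : ∑ ω, Q ω = 1)
    (T : Ω → ℝ) :
    ∑ ω, P ω * T ω - Real.log (∑ ω, Q ω * Real.exp (T ω)) ≤
    ∑ ω, P ω * Real.log (P ω / Q ω) := by
  have hne : (Finset.univ : Finset Ω).Nonempty := by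
    by_contra h
    rw [Finset.not_nonempty_iff_eq_empty] at h
    simp [h] at hP1
  set Z := ∑ ω, Q ω * Real.exp (T ω) with hZ
  have hZpos : 0 < Z := by
    apply Finset.sum_pos (fun ω _ => mul_pos (hQ0 ω) (Real.exp_pos _)) hne
  set G := fun ω => Q ω * Real.exp (T ω) / Z with hG
  have hGpos : ∀ ω, 0 < G ω := fun ω =>
    div_pos (mul_pos (hQ0 ω) (Real.exp_pos _)) hZpos
  have hGsum : ∑ ω, G ω = 1 := by
    rw [hG, ← Finset.sum_div, ← hZ, div_self hZpos.ne']
  -- pointwise bound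
  have key : ∀ ω, P ω - G ω ≤
      P ω * Real.log (P ω / Q ω) - P ω * T ω + P ω * Real.log Z := by
    intro ω
    rcases eq_or_lt_of_le (hP0 ω) with h0 | hp
    · simp [← h0]
      exact (hGpos ω).le
    · have hq := hQ0 ω
      have hrw : Real.log (P ω / Q ω) - T ω + Real.log Z = Real.log (P ω / G ω) := by
        rw [hG]
        rw [Real.log_div hp.ne' (div_pos (mul_pos hq (Real.exp_pos _)) hZpos).ne',
          Real.log_div (mul_pos hq (Real.exp_pos _)).ne' hZpos.ne',
          Real.log_mul hq.ne' (Real.exp_pos _).ne', Real.log_exp,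
          Real.log_div hp.ne' hq.ne']
        ring
      have hlog : 1 - G ω / P ω ≤ Real.log (P ω / G ω) := by
        have := Real.log_le_sub_one_of_pos (show 0 < G ω / P ω from div_pos (hGpos ω) hp)
        have h2 : Real.log (G ω / P ω) = - Real.log (P ω / G ω) := by
          rw [← Real.log_inv, inv_div]
        linarith
      calc P ω - G ω = P ω * (1 - G ω / P ω) := by
            field_simp
        _ ≤ P ω * Real.log (P ω / G ω) := by
            exact mul_le_mul_of_nonneg_left hlog hp.le
        _ = P ω * Real.log (P ω / Q ω) - P ω * T ω + P ω * Real.log Z := by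
            rw [← hrw]; ring
  have hsum : ∑ ω, (P ω - G ω) ≤
      ∑ ω, (P ω * Real.log (P ω / Q ω) - P ω * T ω + P ω * Real.log Z) :=
    Finset.sum_le_sum (fun ω _ => key ω)
  rw [Finset.sum_sub_distrib, hP1, hGsum] at hsum
  have hexp : ∑ ω, (P ω * Real.log (P ω / Q ω) - P ω * T ω + P ω * Real.log Z)
      = ∑ ω, P ω * Real.log (P ω / Q ω) - ∑ ω, P ω * T ω + Real.log Z := by
    rw [Finset.sum_add_distrib, Finset.sum_sub_distrib, ← Finset.sum_mul, hP1, one_mul]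
  rw [hexp] at hsum
  linarith
end

section
/- Let Ω be a finite type and let P and Q be strictly positive probability distributions on Ω. Define T* : Ω → ℝ by T* ω = Real.log (P ω / Q ω). Then ∑_ω P ω * T* ω - Real.log (∑_ω Q ω * Real.exp (T* ω)) = KL(P ‖ Q), where KL(P ‖ Q) = ∑_ω P ω * Real.log (P ω / Q ω). Consequently the Donsker–Varadhan supremum sup over T : Ω → ℝ of (∑_ω P ω * T ω - Real.log (∑_ω Q ω * Real.exp (T ω))) equals KL(P ‖ Q). -/
open Real Finset in
lemma dv_le (Ω : Type*) [Fintype Ω]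
    (P Q : Ω → ℝ) (hP0 : ∀ ω, 0 < P ω) (hP1 : ∑ ω, P ω = 1)
    (hQ0 : ∀ ω, 0 < Q ω) (T : Ω → ℝ) :
    ∑ ω, P ω * T ω - Real.log (∑ ω, Q ω * Real.exp (T ω)) ≤
      ∑ ω, P ω * Real.log (P ω / Q ω) := by
  have key : ∑ ω, P ω * Real.log (Q ω * Real.exp (T ω) / P ω) ≤
      Real.log (∑ ω, Q ω * Real.exp (T ω)) := by
    have h := (strictConcaveOn_log_Ioi.concaveOn).le_map_sum
      (t := Finset.univ) (w := P) (p := fun ω => Q ω * Real.exp (T ω) / P ω)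
      (fun i _ => (hP0 i).le) hP1
      (fun i _ => by
        have : 0 < Q i * Real.exp (T i) / P i :=
          div_pos (mul_pos (hQ0 i) (Real.exp_pos _)) (hP0 i)
        simpa using this)
    simp only [smul_eq_mul] at h
    calc ∑ ω, P ω * Real.log (Q ω * Real.exp (T ω) / P ω) ≤
        Real.log (∑ ω, P ω * (Q ω * Real.exp (T ω) / P ω)) := h
      _ = Real.log (∑ ω, Q ω * Real.exp (T ω)) := by
          congr 1; refine Finset.sum_congr rfl fun ω _ => ?_
          rw [mul_div_cancel₀ _ (hP0 ω).ne']
  have expand : ∀ ω, P ω * Real.log (Q ω * Real.exp (T ω) / P ω)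
      = P ω * T ω - P ω * Real.log (P ω / Q ω) := by
    intro ω
    rw [Real.log_div (mul_pos (hQ0 ω) (Real.exp_pos _)).ne' (hP0 ω).ne', Real.log_mul (hQ0 ω).ne' (Real.exp_pos _).ne',
      Real.log_exp, Real.log_div (hP0 ω).ne' (hQ0 ω).ne']
    ring
  simp only [expand, Finset.sum_sub_distrib] at key
  linarith




/-- attainment in the Donsker–Varadhan representation: the log density
ratio `T* ω = log (P ω / Q ω)` attains the KL divergence, and the supremum of the
Donsker–Varadhan functional over all `T : Ω → ℝ` equals `KL(P ‖ Q)`. -/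
theorem stmt_6 (Ω : Type*) [Fintype Ω]
    (P Q : Ω → ℝ) (hP0 : ∀ ω, 0 < P ω) (hP1 : ∑ ω, P ω = 1)
    (hQ0 : ∀ ω, 0 < Q ω) (hQ1 : ∑ ω, Q ω = 1) :
    (∑ ω, P ω * Real.log (P ω / Q ω) -
      Real.log (∑ ω, Q ω * Real.exp (Real.log (P ω / Q ω))) =
      ∑ ω, P ω * Real.log (P ω / Q ω)) ∧
    ((⨆ T : Ω → ℝ, (∑ ω, P ω * T ω - Real.log (∑ ω, Q ω * Real.exp (T ω)))) =
      ∑ ω, P ω * Real.log (P ω / Q ω)) := by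
  have hattain : ∑ ω, Q ω * Real.exp (Real.log (P ω / Q ω)) = 1 := by
    rw [← hP1]
    refine Finset.sum_congr rfl fun ω _ => ?_
    rw [Real.exp_log (div_pos (hP0 ω) (hQ0 ω)), mul_div_cancel₀ _ (hQ0 ω).ne']
  have h1 : ∑ ω, P ω * Real.log (P ω / Q ω) -
      Real.log (∑ ω, Q ω * Real.exp (Real.log (P ω / Q ω))) =
      ∑ ω, P ω * Real.log (P ω / Q ω) := by
    rw [hattain, Real.log_one, sub_zero]
  have bdd : BddAbove (Set.range fun T : Ω → ℝ =>
      ∑ ω, P ω * T ω - Real.log (∑ ω, Q ω * Real.exp (T ω))) := by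
    refine ⟨∑ ω, P ω * Real.log (P ω / Q ω), ?_⟩
    rintro x ⟨T, rfl⟩
    exact dv_le Ω P Q hP0 hP1 hQ0 T
  refine ⟨h1, le_antisymm (ciSup_le fun T => dv_le Ω P Q hP0 hP1 hQ0 T) ?_⟩
  rw [← h1]
  exact le_ciSup bdd (fun ω => Real.log (P ω / Q ω))
end

section
/- Let X and Y be finite types and let Q be a strictly positive probability distribution on X × Y with marginals Q_X and Q_Y. Define T* : X × Y → ℝ by T* (x,y) = Real.log (Q (x,y) / (Q_X x * Q_Y y)). Then Real.log (∑_{(x,y)} Q_X x * Q_Y y * Real.exp (T* (x,y))) = 0 and ∑_{(x,y)} Q (x,y) * T* (x,y) = I_Q(X;Y); hence the MINE objective evaluated at T* equals the mutual information, and the supremum over all T : X × Y → ℝ of ∑_{(x,y)} Q (x,y) * T (x,y) - Real.log (∑_{(x,y)} Q_X x * Q_Y y * Real.exp (T (x,y))) equals I_Q(X;Y). -/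
/-- tightness of MINE: at the optimal statistics function
`T* (x,y) = log (Q (x,y) / (Q_X x * Q_Y y))` the log-partition vanishes, the
expectation of `T*` equals the mutual information, the MINE objective at `T*`
equals the mutual information, and the supremum over all `T` equals it as well. -/
theorem stmt_8 (X Y : Type*) [Fintype X] [Fintype Y]
    (Q : X × Y → ℝ) (hQ0 : ∀ p, 0 < Q p) (hQ1 : ∑ p, Q p = 1) :
    (Real.log (∑ x, ∑ y, (∑ y', Q (x, y')) * (∑ x', Q (x', y)) *
      Real.exp (Real.log (Q (x, y) / ((∑ y', Q (x, y')) * (∑ x', Q (x', y)))))) = 0) ∧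
    (∑ x, ∑ y, Q (x, y) *
      Real.log (Q (x, y) / ((∑ y', Q (x, y')) * (∑ x', Q (x', y)))) =
      ∑ x, ∑ y, Q (x, y) *
        Real.log (Q (x, y) / ((∑ y', Q (x, y')) * (∑ x', Q (x', y))))) ∧
    (∑ x, ∑ y, Q (x, y) *
        Real.log (Q (x, y) / ((∑ y', Q (x, y')) * (∑ x', Q (x', y)))) -
      Real.log (∑ x, ∑ y, (∑ y', Q (x, y')) * (∑ x', Q (x', y)) *
        Real.exp (Real.log (Q (x, y) / ((∑ y', Q (x, y')) * (∑ x', Q (x', y)))))) =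
      ∑ x, ∑ y, Q (x, y) *
        Real.log (Q (x, y) / ((∑ y', Q (x, y')) * (∑ x', Q (x', y))))) ∧
    ((⨆ T : X × Y → ℝ, (∑ x, ∑ y, Q (x, y) * T (x, y) -
        Real.log (∑ x, ∑ y, (∑ y', Q (x, y')) * (∑ x', Q (x', y)) *
          Real.exp (T (x, y))))) =
      ∑ x, ∑ y, Q (x, y) *
        Real.log (Q (x, y) / ((∑ y', Q (x, y')) * (∑ x', Q (x', y))))) := by
  classical
  have hXY : Nonempty (X × Y) := by
    by_contra h
    rw [not_nonempty_iff] at h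
    rw [Finset.sum_eq_zero (fun p _ => (h.false p).elim)] at hQ1
    norm_num at hQ1
  have hX : Nonempty X := ⟨hXY.some.1⟩
  have hY : Nonempty Y := ⟨hXY.some.2⟩
  have hQX : ∀ x : X, 0 < ∑ y', Q (x, y') := fun x =>
    Finset.sum_pos (fun y _ => hQ0 _) Finset.univ_nonempty
  have hQY : ∀ y : Y, 0 < ∑ x', Q (x', y) := fun y =>
    Finset.sum_pos (fun x _ => hQ0 _) Finset.univ_nonempty
  have hP0 : ∀ (x : X) (y : Y), 0 < (∑ y', Q (x, y')) * (∑ x', Q (x', y)) :=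
    fun x y => mul_pos (hQX x) (hQY y)
  have hQ1' : ∑ x, ∑ y, Q (x, y) = 1 := by
    rw [← Fintype.sum_prod_type]; exact hQ1
  have hexp : ∀ (x : X) (y : Y), (∑ y', Q (x, y')) * (∑ x', Q (x', y)) *
      Real.exp (Real.log (Q (x, y) / ((∑ y', Q (x, y')) * (∑ x', Q (x', y))))) = Q (x, y) :=
    fun x y => by
      rw [Real.exp_log (div_pos (hQ0 _) (hP0 x y)), mul_div_cancel₀ _ (hP0 x y).ne']
  have hZ1 : (∑ x, ∑ y, (∑ y', Q (x, y')) * (∑ x', Q (x', y)) *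
      Real.exp (Real.log (Q (x, y) / ((∑ y', Q (x, y')) * (∑ x', Q (x', y)))))) = 1 := by
    rw [← hQ1']
    exact Finset.sum_congr rfl fun x _ => Finset.sum_congr rfl fun y _ => hexp x y
  have part1 : Real.log (∑ x, ∑ y, (∑ y', Q (x, y')) * (∑ x', Q (x', y)) *
      Real.exp (Real.log (Q (x, y) / ((∑ y', Q (x, y')) * (∑ x', Q (x', y)))))) = 0 := by
    rw [hZ1, Real.log_one]
  -- Donsker–Varadhan upper bound
  have key : ∀ T : X × Y → ℝ,
      (∑ x, ∑ y, Q (x, y) * T (x, y)) -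
        Real.log (∑ x, ∑ y, (∑ y', Q (x, y')) * (∑ x', Q (x', y)) * Real.exp (T (x, y))) ≤
      ∑ x, ∑ y, Q (x, y) * Real.log (Q (x, y) / ((∑ y', Q (x, y')) * (∑ x', Q (x', y)))) := by
    intro T
    set Z : ℝ := ∑ x, ∑ y, (∑ y', Q (x, y')) * (∑ x', Q (x', y)) * Real.exp (T (x, y)) with hZdef
    have hZ0 : 0 < Z := by
      apply Finset.sum_pos (fun x _ => Finset.sum_pos (fun y _ => ?_) Finset.univ_nonempty)
        Finset.univ_nonempty
      exact mul_pos (hP0 x y) (Real.exp_pos _)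
    have per : ∀ (x : X) (y : Y),
        Q (x, y) * T (x, y) -
          Q (x, y) * Real.log (Q (x, y) / ((∑ y', Q (x, y')) * (∑ x', Q (x', y)))) -
          Q (x, y) * Real.log Z ≤
        (∑ y', Q (x, y')) * (∑ x', Q (x', y)) * Real.exp (T (x, y)) / Z - Q (x, y) := by
      intro x y
      have hq := hQ0 (x, y)
      have hp := hP0 x y
      have t0 : 0 < (∑ y', Q (x, y')) * (∑ x', Q (x', y)) * Real.exp (T (x, y)) /
          (Q (x, y) * Z) := by positivity
      have hlog := Real.log_le_sub_one_of_pos t0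
      have hlt : Real.log ((∑ y', Q (x, y')) * (∑ x', Q (x', y)) * Real.exp (T (x, y)) /
          (Q (x, y) * Z)) =
          T (x, y) - Real.log (Q (x, y) / ((∑ y', Q (x, y')) * (∑ x', Q (x', y)))) -
            Real.log Z := by
        rw [Real.log_div (by positivity) (by positivity),
          Real.log_mul hp.ne' (Real.exp_pos _).ne', Real.log_exp,
          Real.log_mul hq.ne' hZ0.ne', Real.log_div hq.ne' hp.ne']
        ring
      have step : Q (x, y) * T (x, y) -
          Q (x, y) * Real.log (Q (x, y) / ((∑ y', Q (x, y')) * (∑ x', Q (x', y)))) -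
          Q (x, y) * Real.log Z ≤
          Q (x, y) * ((∑ y', Q (x, y')) * (∑ x', Q (x', y)) * Real.exp (T (x, y)) /
            (Q (x, y) * Z) - 1) := by
        calc Q (x, y) * T (x, y) -
            Q (x, y) * Real.log (Q (x, y) / ((∑ y', Q (x, y')) * (∑ x', Q (x', y)))) -
            Q (x, y) * Real.log Z
            = Q (x, y) * Real.log ((∑ y', Q (x, y')) * (∑ x', Q (x', y)) *
                Real.exp (T (x, y)) / (Q (x, y) * Z)) := by rw [hlt]; ring
          _ ≤ Q (x, y) * ((∑ y', Q (x, y')) * (∑ x', Q (x', y)) * Real.exp (T (x, y)) /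
                (Q (x, y) * Z) - 1) := by
              exact mul_le_mul_of_nonneg_left hlog hq.le
      refine step.trans (le_of_eq ?_)
      field_simp
    have hsum := Finset.sum_le_sum fun x (_ : x ∈ Finset.univ) =>
      Finset.sum_le_sum fun y (_ : y ∈ Finset.univ) => per x y
    have eL : ∑ x, ∑ y, (Q (x, y) * T (x, y) -
        Q (x, y) * Real.log (Q (x, y) / ((∑ y', Q (x, y')) * (∑ x', Q (x', y)))) -
        Q (x, y) * Real.log Z) =
        (∑ x, ∑ y, Q (x, y) * T (x, y)) -
        (∑ x, ∑ y, Q (x, y) * Real.log (Q (x, y) / ((∑ y', Q (x, y')) * (∑ x', Q (x', y))))) -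
        Real.log Z := by
      simp only [Finset.sum_sub_distrib, ← Finset.sum_mul]
      rw [hQ1', one_mul]
    have eR : ∑ x, ∑ y, ((∑ y', Q (x, y')) * (∑ x', Q (x', y)) * Real.exp (T (x, y)) / Z -
        Q (x, y)) = 0 := by
      simp only [Finset.sum_sub_distrib, ← Finset.sum_div]
      rw [← hZdef, div_self hZ0.ne', hQ1']
      norm_num
    rw [eL, eR] at hsum
    linarith
  refine ⟨part1, rfl, by rw [part1]; ring, ?_⟩
  set MI : ℝ := ∑ x, ∑ y, Q (x, y) *
      Real.log (Q (x, y) / ((∑ y', Q (x, y')) * (∑ x', Q (x', y)))) with hMI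
  have bdd : BddAbove (Set.range fun T : X × Y → ℝ =>
      (∑ x, ∑ y, Q (x, y) * T (x, y)) -
        Real.log (∑ x, ∑ y, (∑ y', Q (x, y')) * (∑ x', Q (x', y)) * Real.exp (T (x, y)))) :=
    ⟨MI, by rintro _ ⟨T, rfl⟩; exact key T⟩
  refine le_antisymm (ciSup_le key) ?_
  have := le_ciSup bdd (fun p : X × Y =>
    Real.log (Q p / ((∑ y', Q (p.1, y')) * (∑ x', Q (x', p.2)))))
  simpa [part1, hMI] using this
end

section
/- Let X and Y be finite types and let Q be a strictly positive probability distribution on X × Y with marginals Q_X, Q_Y and conditionals Q(x|y) = Q(x,y)/Q_Y y and Q(y|x) = Q(x,y)/Q_X x. For every strictly positive conditional distribution q̃ : Y → X → ℝ (each q̃ y a probability vector on X), one has I_Q(X;Y) = ∑_{(x,y)} Q (x,y) * Real.log (q̃ y x / Q_X x) + ∑_y Q_Y y * KL(Q(·|y) ‖ q̃ y), and consequently I_Q(X;Y) ≥ ∑_{(x,y)} Q (x,y) * Real.log (q̃ y x) - ∑_x Q_X x * Real.log (Q_X x), with equality when q̃ y = Q(·|y) for all y. -/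
/-- Gibbs' inequality for finite probability vectors. -/
lemma gibbs_aux {X : Type*} [Fintype X] (p q : X → ℝ)
    (hp : ∀ x, 0 < p x) (hq : ∀ x, 0 < q x)
    (hpq : ∑ x, p x = ∑ x, q x) :
    0 ≤ ∑ x, p x * Real.log (p x / q x) := by
  have h : ∑ x, p x * Real.log (q x / p x) ≤ 0 := by
    calc ∑ x, p x * Real.log (q x / p x)
        ≤ ∑ x, p x * (q x / p x - 1) := by
          apply Finset.sum_le_sum
          intro x _
          exact mul_le_mul_of_nonneg_left
            (Real.log_le_sub_one_of_pos (div_pos (hq x) (hp x))) (hp x).le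
      _ = ∑ x, (q x - p x) := by
          apply Finset.sum_congr rfl
          intro x _
          field_simp [(hp x).ne']
      _ = 0 := by rw [Finset.sum_sub_distrib, hpq]; ring
  have heq : ∑ x, p x * Real.log (p x / q x)
      = -∑ x, p x * Real.log (q x / p x) := by
    rw [← Finset.sum_neg_distrib]
    apply Finset.sum_congr rfl
    intro x _
    rw [Real.log_div (hp x).ne' (hq x).ne', Real.log_div (hq x).ne' (hp x).ne']
    ring
  linarith

/-- Barber–Agakov bound, Equation (13) of the paper: for every strictly
positive variational conditional `q̃ : Y → X → ℝ`, the mutual information decomposes as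
the variational term plus an expected KL divergence; consequently it is bounded below by
`∑ Q(x,y) log (q̃ y x) - ∑ Q_X x log (Q_X x)`, with equality when `q̃ y = Q(·|y)`. -/
theorem stmt_9 (X Y : Type*) [Fintype X] [Fintype Y]
    (Q : X × Y → ℝ) (hQ0 : ∀ p, 0 < Q p) (hQ1 : ∑ p, Q p = 1)
    (qt : Y → X → ℝ) (hqt0 : ∀ y x, 0 < qt y x) (hqt1 : ∀ y, ∑ x, qt y x = 1) :
    (∑ x, ∑ y, Q (x, y) *
        Real.log (Q (x, y) / ((∑ y', Q (x, y')) * (∑ x', Q (x', y)))) =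
      (∑ x, ∑ y, Q (x, y) * Real.log (qt y x / ∑ y', Q (x, y'))) +
      ∑ y, (∑ x', Q (x', y)) *
        ∑ x, (Q (x, y) / ∑ x', Q (x', y)) *
          Real.log ((Q (x, y) / ∑ x', Q (x', y)) / qt y x)) ∧
    (∑ x, ∑ y, Q (x, y) *
        Real.log (Q (x, y) / ((∑ y', Q (x, y')) * (∑ x', Q (x', y)))) ≥
      (∑ x, ∑ y, Q (x, y) * Real.log (qt y x)) -
        ∑ x, (∑ y', Q (x, y')) * Real.log (∑ y', Q (x, y'))) ∧
    ((∀ y x, qt y x = Q (x, y) / ∑ x', Q (x', y)) →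
      ∑ x, ∑ y, Q (x, y) *
        Real.log (Q (x, y) / ((∑ y', Q (x, y')) * (∑ x', Q (x', y)))) =
      (∑ x, ∑ y, Q (x, y) * Real.log (qt y x)) -
        ∑ x, (∑ y', Q (x, y')) * Real.log (∑ y', Q (x, y'))) := by
  -- nonempty types
  have hne : Nonempty (X × Y) := by
    rcases isEmpty_or_nonempty (X × Y) with h | h
    · rw [Finset.univ_eq_empty, Finset.sum_empty] at hQ1; norm_num at hQ1
    · exact h
  haveI : Nonempty X := ⟨hne.some.1⟩
  haveI : Nonempty Y := ⟨hne.some.2⟩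
  have hQX : ∀ x, 0 < ∑ y', Q (x, y') :=
    fun x => Finset.sum_pos (fun y _ => hQ0 _) Finset.univ_nonempty
  have hQY : ∀ y, 0 < ∑ x', Q (x', y) :=
    fun y => Finset.sum_pos (fun x _ => hQ0 _) Finset.univ_nonempty
  -- the KL double sum simplifies
  have hKL : ∑ y, (∑ x', Q (x', y)) *
        ∑ x, (Q (x, y) / ∑ x', Q (x', y)) *
          Real.log ((Q (x, y) / ∑ x', Q (x', y)) / qt y x)
      = ∑ x, ∑ y, Q (x, y) *
          Real.log ((Q (x, y) / ∑ x', Q (x', y)) / qt y x) := by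
    rw [Finset.sum_comm]
    apply Finset.sum_congr rfl
    intro y _
    rw [Finset.mul_sum]
    apply Finset.sum_congr rfl
    intro x _
    have := (hQY y).ne'
    field_simp
  -- Part 1
  have h1 : ∑ x, ∑ y, Q (x, y) *
        Real.log (Q (x, y) / ((∑ y', Q (x, y')) * (∑ x', Q (x', y)))) =
      (∑ x, ∑ y, Q (x, y) * Real.log (qt y x / ∑ y', Q (x, y'))) +
      ∑ y, (∑ x', Q (x', y)) *
        ∑ x, (Q (x, y) / ∑ x', Q (x', y)) *
          Real.log ((Q (x, y) / ∑ x', Q (x', y)) / qt y x) := by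
    rw [hKL, ← Finset.sum_add_distrib]
    apply Finset.sum_congr rfl
    intro x _
    rw [← Finset.sum_add_distrib]
    apply Finset.sum_congr rfl
    intro y _
    rw [← mul_add]
    congr 1
    rw [← Real.log_mul (div_pos (hqt0 y x) (hQX x)).ne' (div_pos (div_pos (hQ0 _) (hQY y)) (hqt0 y x)).ne']
    congr 1
    field_simp [(hqt0 y x).ne', (hQX x).ne', (hQY y).ne']
  -- variational term rewriting
  have h2 : ∑ x, ∑ y, Q (x, y) * Real.log (qt y x / ∑ y', Q (x, y')) =
      (∑ x, ∑ y, Q (x, y) * Real.log (qt y x)) -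
        ∑ x, (∑ y', Q (x, y')) * Real.log (∑ y', Q (x, y')) := by
    rw [← Finset.sum_sub_distrib]
    apply Finset.sum_congr rfl
    intro x _
    rw [Finset.sum_mul, ← Finset.sum_sub_distrib]
    apply Finset.sum_congr rfl
    intro y _
    rw [Real.log_div (hqt0 y x).ne' (hQX x).ne']
    ring
  -- KL nonnegativity
  have h3 : 0 ≤ ∑ y, (∑ x', Q (x', y)) *
        ∑ x, (Q (x, y) / ∑ x', Q (x', y)) *
          Real.log ((Q (x, y) / ∑ x', Q (x', y)) / qt y x) := by
    apply Finset.sum_nonneg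
    intro y _
    apply mul_nonneg (hQY y).le
    apply gibbs_aux (fun x => Q (x, y) / ∑ x', Q (x', y)) (qt y)
      (fun x => div_pos (hQ0 _) (hQY y)) (hqt0 y)
    rw [hqt1 y, ← Finset.sum_div, div_self (hQY y).ne']
  refine ⟨h1, ?_, ?_⟩
  · rw [h1, h2]; linarith
  · intro heq
    rw [h1, h2]
    have : ∑ y, (∑ x', Q (x', y)) *
        ∑ x, (Q (x, y) / ∑ x', Q (x', y)) *
          Real.log ((Q (x, y) / ∑ x', Q (x', y)) / qt y x) = 0 := by
      apply Finset.sum_eq_zero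
      intro y _
      rw [mul_eq_zero]
      right
      apply Finset.sum_eq_zero
      intro x _
      rw [heq y x, div_self (by rw [← heq y x]; exact (hqt0 y x).ne'), Real.log_one, mul_zero]
    rw [this, add_zero]
end
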